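/- arXiv:1410.5087 — 7 statements merged into one kernel-verified Lean document; each statement's English description precedes it below -/
import Mathlib

section
/- Let S^k_n be a generalized crown with n ≥ 3, k ≥ 0, and let 1 ≤ i ≤ j ≤ n+k with 0 < j - i < n - 1. Then the duals of critical pairs (a_u, b_i) and (a_v, b_j) form a strict alternating cycle (so the corresponding entry of the adjacency matrix of the skeleton of the strict hypergraph is 1) if and only if u ∈ {i, i+1, ..., j-1} and v ∈ {i+k+1, i+k+2, ..., j+k} (indices modulo n+k). -/
/-- In the generalized crown `S^k_n` (indices in `ZMod (n+k)`), the maximal element `b_i`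
is incomparable with the minimal element `a_u` iff `u ≡ i + t (mod n+k)` for some `0 ≤ t ≤ k`. -/
def crownMiss (k : ℕ) {N : ℕ} (i u : ZMod N) : Prop :=
  ∃ t : ℕ, t ≤ k ∧ u = i + (t : ZMod N)


/-- The order of the generalized crown `S^k_n` on `ZMod (n+k) ⊕ ZMod (n+k)`:
`Sum.inl u` is the minimal element `a_u`, `Sum.inr i` is the maximal element `b_i`;
`a_u ≤ b_i` iff `b_i` is not incomparable with `a_u` (a "hit"). -/
def crownLe (k : ℕ) {N : ℕ} : ZMod N ⊕ ZMod N → ZMod N ⊕ ZMod N → Prop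
  | Sum.inl u, Sum.inl v => u = v
  | Sum.inl u, Sum.inr i => ¬ crownMiss k i u
  | Sum.inr _, Sum.inl _ => False
  | Sum.inr i, Sum.inr j => i = j

/-- Strict order of the generalized crown. -/
def crownLt (k : ℕ) {N : ℕ} (x y : ZMod N ⊕ ZMod N) : Prop :=
  crownLe k x y ∧ ¬ crownLe k y x

/-- Incomparability in the generalized crown. -/
def crownInc (k : ℕ) {N : ℕ} (x y : ZMod N ⊕ ZMod N) : Prop :=
  ¬ crownLe k x y ∧ ¬ crownLe k y x

/-- `(x, y)` is a critical pair: `x ∥ y`, `D(x) ⊆ D(y)` and `U(y) ⊆ U(x)`. -/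
def crownCrit (k : ℕ) {N : ℕ} (x y : ZMod N ⊕ ZMod N) : Prop :=
  crownInc k x y ∧ (∀ z, crownLt k z x → crownLt k z y) ∧
    (∀ z, crownLt k y z → crownLt k x z)


/-- `{(x₁,y₁),(x₂,y₂)}` is a strict alternating cycle of length 2 for the order `le`:
both pairs are incomparable, `y₁ ≤ x₂`, `y₂ ≤ x₁`, and `yᵢ ≤ xⱼ` only for `j = i+1` cyclically. -/
def sac2 {α : Type*} (le : α → α → Prop) (x1 y1 x2 y2 : α) : Prop :=
  (¬ le x1 y1 ∧ ¬ le y1 x1) ∧ (¬ le x2 y2 ∧ ¬ le y2 x2) ∧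
    le y1 x2 ∧ le y2 x1 ∧ ¬ le y1 x1 ∧ ¬ le y2 x2

/-- For `1 ≤ i ≤ j ≤ n+k` with `0 < j - i < n - 1`, the duals of critical pairs
`(a_u, b_i)` and `(a_v, b_j)` of `S^k_n` form a strict alternating cycle iff
`u ∈ {i, …, j-1}` and `v ∈ {i+k+1, …, j+k}` (indices mod `n+k`). -/
theorem crown_block_small (n k i j : ℕ) (hn : 3 ≤ n) (hi : 1 ≤ i) (hij : i ≤ j)
    (hj : j ≤ n + k) (hd1 : 0 < j - i) (hd2 : j - i < n - 1)
    (u v : ZMod (n + k))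
    (hu : crownMiss k (i : ZMod (n + k)) u) (hv : crownMiss k (j : ZMod (n + k)) v) :
    sac2 (crownLe k) (Sum.inr (i : ZMod (n + k))) (Sum.inl u)
        (Sum.inr (j : ZMod (n + k))) (Sum.inl v) ↔
      ((∃ s : ℕ, s < j - i ∧ u = (i : ZMod (n + k)) + (s : ZMod (n + k))) ∧
        (∃ s : ℕ, s < j - i ∧ v = ((i + k + 1 : ℕ) : ZMod (n + k)) + (s : ZMod (n + k)))) := by
  haveI : NeZero (n + k) := ⟨by omega⟩
  obtain ⟨t, ht, hut⟩ := hu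
  obtain ⟨t', ht', hvt⟩ := hv
  have hcast : ∀ a b : ℕ, a < n + k → b < n + k →
      ((a : ZMod (n + k)) = (b : ZMod (n + k)) ↔ a = b) := by
    intro a b ha hb
    constructor
    · intro h
      have h2 := congrArg ZMod.val h
      rwa [ZMod.val_cast_of_lt ha, ZMod.val_cast_of_lt hb] at h2
    · rintro rfl; rfl
  have hj' : (j : ZMod (n + k)) = (i : ZMod (n + k)) + ((j - i : ℕ) : ZMod (n + k)) := by
    have h : j = i + (j - i) := by omega
    rw [← Nat.cast_add, ← h]
  have h1 : crownMiss k (j : ZMod (n + k)) u ↔ j - i ≤ t := by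
    constructor
    · rintro ⟨t'', htk, he⟩
      rw [hut, hj'] at he
      have he2 : ((t : ℕ) : ZMod (n + k)) = ((j - i + t'' : ℕ) : ZMod (n + k)) := by
        push_cast
        linear_combination he
      have := (hcast t (j - i + t'') (by omega) (by omega)).mp he2
      omega
    · intro hdt
      refine ⟨t - (j - i), by omega, ?_⟩
      have hstep : ((j - i : ℕ) : ZMod (n + k)) + ((t - (j - i) : ℕ) : ZMod (n + k)) =
          ((t : ℕ) : ZMod (n + k)) := by
        rw [← Nat.cast_add]
        congr 1
        omega
      rw [hut, hj', add_assoc, hstep]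
  have h2 : crownMiss k (i : ZMod (n + k)) v ↔ (j - i) + t' ≤ k := by
    constructor
    · rintro ⟨t'', htk, he⟩
      rw [hvt, hj'] at he
      have he2 : ((j - i + t' : ℕ) : ZMod (n + k)) = ((t'' : ℕ) : ZMod (n + k)) := by
        push_cast
        linear_combination he
      have := (hcast (j - i + t') t'' (by omega) (by omega)).mp he2
      omega
    · intro hdt
      refine ⟨(j - i) + t', hdt, ?_⟩
      rw [hvt, hj', add_assoc, ← Nat.cast_add]
  have h3 : (∃ s : ℕ, s < j - i ∧ u = (i : ZMod (n + k)) + (s : ZMod (n + k))) ↔ t < j - i := by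
    constructor
    · rintro ⟨s, hs, he⟩
      rw [hut] at he
      have he2 := (hcast t s (by omega) (by omega)).mp (add_left_cancel he)
      omega
    · intro htd
      exact ⟨t, htd, hut⟩
  have h4 : (∃ s : ℕ, s < j - i ∧ v = ((i + k + 1 : ℕ) : ZMod (n + k)) + (s : ZMod (n + k))) ↔
      k < (j - i) + t' := by
    constructor
    · rintro ⟨s, hs, he⟩
      rw [hvt, hj'] at he
      have he2 : ((j - i + t' : ℕ) : ZMod (n + k)) = ((k + 1 + s : ℕ) : ZMod (n + k)) := by
        push_cast at he ⊢
        linear_combination he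
      have := (hcast (j - i + t') (k + 1 + s) (by omega) (by omega)).mp he2
      omega
    · intro hk
      refine ⟨(j - i) + t' - (k + 1), by omega, ?_⟩
      have harg : (j - i) + t' = k + 1 + ((j - i) + t' - (k + 1)) := by omega
      have hstep : ((j - i : ℕ) : ZMod (n + k)) + (t' : ZMod (n + k)) =
          ((k + 1 + ((j - i) + t' - (k + 1)) : ℕ) : ZMod (n + k)) := by
        rw [← Nat.cast_add, ← harg]
      rw [hvt, hj', add_assoc, hstep]
      push_cast
      ring
  simp only [sac2, crownLe, not_false_iff, not_not, true_and, and_true, not_false_eq_true]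
  rw [h1, h2]
  constructor
  · rintro ⟨-, -, hju, hiv, -, -⟩
    exact ⟨h3.mpr (by omega), h4.mpr (by omega)⟩
  · rintro ⟨hle, hri⟩
    have htd := h3.mp hle
    have hkd := h4.mp hri
    exact ⟨⟨t, ht, hut⟩, ⟨t', ht', hvt⟩, by omega, by omega, ⟨t, ht, hut⟩, ⟨t', ht', hvt⟩⟩
end

section
/- Let ⋊_ℓ S^k_n be the ℓ-layered generalized crown with n ≥ k+3 and ℓ ≥ 1. If (x^r, x^{r+1}) is a critical pair from rows r, r+1 and (x^t, x^{t+1}) is a critical pair from rows t, t+1 with |r - t| > 1, then their duals never form a strict alternating cycle; hence the corresponding block A_{r,t} of the adjacency matrix of the skeleton of the strict hypergraph is the zero matrix. -/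
/-- One step of the layered generalized crown `⋊_ℓ S^k_n` on `ℕ × ZMod (n+k)`:
`x^{i+1}_j` covers `x^i_m` exactly when `m` is a "hit" of `j`. -/
def layStep (k : ℕ) {N : ℕ} (x y : ℕ × ZMod N) : Prop :=
  y.1 = x.1 + 1 ∧ ¬ crownMiss k y.2 x.2

/-- The order of the layered generalized crown: reflexive transitive closure. -/
def layLe (k : ℕ) {N : ℕ} : ℕ × ZMod N → ℕ × ZMod N → Prop :=
  Relation.ReflTransGen (layStep k)

/-- The strict order of the layered generalized crown: transitive closure. -/
def layLt (k : ℕ) {N : ℕ} : ℕ × ZMod N → ℕ × ZMod N → Prop :=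
  Relation.TransGen (layStep k)


lemma layLe_fst_le {k N : ℕ} {x y : ℕ × ZMod N} (h : layLe k x y) : x.1 ≤ y.1 := by
  induction h with
  | refl => exact le_rfl
  | tail _ hstep ih => rw [hstep.1]; omega

/-- In `⋊_ℓ S^k_n` with `n ≥ k+3`, duals of critical pairs coming from rows
`r, r+1` and `t, t+1` with `|r - t| > 1` never form a strict alternating cycle;
hence the corresponding block `A_{r,t}` of the adjacency matrix is zero. -/
theorem layered_far_blocks_zero (n k l r t : ℕ) (h : k + 3 ≤ n) (hl : 1 ≤ l)
    (hr1 : 1 ≤ r) (hr2 : r ≤ l) (ht1 : 1 ≤ t) (ht2 : t ≤ l)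
    (hrt : r + 1 < t ∨ t + 1 < r)
    (u α v β : ZMod (n + k))
    (hcrit1 : crownMiss k α u) (hcrit2 : crownMiss k β v) :
    ¬ sac2 (layLe k) (r + 1, α) (r, u) (t + 1, β) (t, v) := by
  rintro ⟨_, _, h1, h2, _⟩
  have a1 := layLe_fst_le h1
  have a2 := layLe_fst_le h2
  simp at a1 a2
  omega
end

section
/- Let 3 ≤ n < k+3, w = ⌈(k+1)/(n-2)⌉, and ℓ > w. In ⋊_ℓ S^k_n, for an element x^{i+w}_β of row X^{i+w} and r with 0 < r < w, the intersection of the strict downset of x^{i+w}_β with row X^{i+r} consists of exactly the n - 1 + (w - r - 1)(n - 2) consecutively (cyclically) indexed elements x^{i+r}_{β - w + r}, x^{i+r}_{β - w + r - 1}, ..., x^{i+r}_{β - (w-r)(n-1)} (indices mod n+k). -/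
lemma miss_iff {k N : ℕ} [NeZero N] (hk : k < N) (i u : ZMod N) :
    crownMiss k i u ↔ (u - i).val ≤ k := by
  constructor
  · rintro ⟨t, ht, rfl⟩
    simp only [add_sub_cancel_left]
    rw [ZMod.val_natCast]
    exact le_trans (Nat.mod_le _ _) ht
  · intro h
    exact ⟨(u - i).val, h, by rw [ZMod.natCast_val, ZMod.cast_id]; ring⟩

lemma step_iff {n k : ℕ} (hn : 3 ≤ n) (j γ : ZMod (n + k)) :
    ¬ crownMiss k j γ ↔ ∃ s : ℕ, 1 ≤ s ∧ s ≤ n - 1 ∧ γ = j - (s : ZMod (n + k)) := by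
  haveI : NeZero (n + k) := ⟨by omega⟩
  rw [miss_iff (by omega)]
  constructor
  · intro h
    push_neg at h
    have hv := (γ - j).val_lt
    refine ⟨n + k - (γ - j).val, by omega, by omega, ?_⟩
    rw [Nat.cast_sub (le_of_lt hv), ZMod.natCast_self, ZMod.natCast_val, ZMod.cast_id]
    ring
  · rintro ⟨s, hs1, hs2, rfl⟩
    have h1 : j - (s : ZMod (n + k)) - j = ((n + k - s : ℕ) : ZMod (n + k)) := by
      rw [Nat.cast_sub (by omega), ZMod.natCast_self]
      ring
    rw [h1, ZMod.val_natCast_of_lt (by omega)]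
    omega

lemma lt_struct {n k : ℕ} (hn : 3 ≤ n) {x y : ℕ × ZMod (n + k)} (h : layLt k x y) :
    ∃ d s : ℕ, 1 ≤ d ∧ y.1 = x.1 + d ∧ d ≤ s ∧ s ≤ d * (n - 1) ∧
      x.2 = y.2 - (s : ZMod (n + k)) := by
  induction h with
  | single hstep =>
      obtain ⟨h1, h2⟩ := hstep
      obtain ⟨s, hs1, hs2, hγ⟩ := (step_iff hn _ _).mp h2
      exact ⟨1, s, le_refl 1, by omega, hs1, by omega, hγ⟩
  | tail hxy hstep ih =>
      obtain ⟨d, s, hd, h1, hds, hsn, hγ⟩ := ih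
      obtain ⟨h1', h2'⟩ := hstep
      obtain ⟨s₁, hs1, hs2, hγ'⟩ := (step_iff hn _ _).mp h2'
      refine ⟨d + 1, s + s₁, by omega, by omega, by omega, ?_, ?_⟩
      · rw [add_mul, one_mul]; omega
      · rw [hγ, hγ']; push_cast; ring

lemma build {n k : ℕ} (hn : 3 ≤ n) : ∀ d s : ℕ, 1 ≤ d → d ≤ s → s ≤ d * (n - 1) →
    ∀ (a : ℕ) (β : ZMod (n + k)), layLt k (a, β - (s : ZMod (n + k))) (a + d, β) := by
  intro d
  induction d with
  | zero => omega
  | succ d ih =>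
    intro s h1 h2 h3 a β
    rcases Nat.eq_zero_or_pos d with rfl | hd
    · exact Relation.TransGen.single ⟨rfl, (step_iff hn _ _).mpr ⟨s, by omega, by simpa using h3, rfl⟩⟩
    · set s' := min (s - 1) (d * (n - 1)) with hs'
      have hdm : d ≤ d * (n - 1) := Nat.le_mul_of_pos_right d (by omega)
      have hA : d ≤ s' := by omega
      have hB : s' ≤ d * (n - 1) := by omega
      have hC : 1 ≤ s - s' := by omega
      have hD : s - s' ≤ n - 1 := by
        have : (d + 1) * (n - 1) = d * (n - 1) + (n - 1) := by rw [add_mul, one_mul]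
        omega
      have key := ih s' hd hA hB a (β - ((s - s' : ℕ) : ZMod (n + k)))
      have heq : β - ((s - s' : ℕ) : ZMod (n + k)) - (s' : ZMod (n + k)) = β - (s : ZMod (n + k)) := by
        set t := s - s' with ht
        have hsum : t + s' = s := by omega
        rw [← hsum]; push_cast; ring
      rw [heq] at key
      have hstep : layStep k (a + d, β - ((s - s' : ℕ) : ZMod (n + k))) (a + (d + 1), β) :=
        ⟨by omega, (step_iff hn _ _).mpr ⟨s - s', hC, hD, rfl⟩⟩
      exact key.tail hstep

/-- In `⋊_ℓ S^k_n` with `3 ≤ n < k+3`, `w = ⌈(k+1)/(n-2)⌉`, `ℓ > w` and `0 < r < w`: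
the strict downset of `x^{i+w}_β` meets row `X^{i+r}` in exactly the
`n - 1 + (w-r-1)(n-2)` consecutively indexed elements
`x^{i+r}_{β-w+r}, x^{i+r}_{β-w+r-1}, …, x^{i+r}_{β-(w-r)(n-1)}` (indices mod `n+k`). -/
theorem layered_downset_row (n k l w i r : ℕ) (hn : 3 ≤ n) (hk : n < k + 3)
    (hw : w = (k + n - 2) / (n - 2)) (hl : w < l) (hr : 0 < r) (hrw : r < w)
    (hi : 1 ≤ i) (hiw : i + w ≤ l + 1) (β : ZMod (n + k)) :
    ∀ γ : ZMod (n + k), layLt k (i + r, γ) (i + w, β) ↔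
      ∃ s : ℕ, s < n - 1 + (w - r - 1) * (n - 2) ∧
        γ = β - ((w - r : ℕ) : ZMod (n + k)) - (s : ZMod (n + k)) := by
  intro γ
  have hwr : 1 ≤ w - r := by omega
  have e1 : (w - r) * (n - 1) = (w - r) * (n - 2) + (w - r) := by
    have h : n - 1 = (n - 2) + 1 := by omega
    rw [h, Nat.mul_add, Nat.mul_one]
  have e2 : (w - r - 1) * (n - 2) + (n - 2) = (w - r) * (n - 2) := by
    conv_rhs => rw [show w - r = (w - r - 1) + 1 from by omega]
    rw [Nat.add_mul, Nat.one_mul]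
  constructor
  · intro h
    obtain ⟨d, s, hd, h1, hds, hsn, hγ⟩ := lt_struct hn h
    simp only at h1 hγ
    have hdwr : d = w - r := by omega
    subst hdwr
    refine ⟨s - (w - r), by omega, ?_⟩
    rw [hγ]
    set t := s - (w - r) with ht
    have hs : s = (w - r) + t := by omega
    rw [hs]; push_cast; ring
  · rintro ⟨s, hs, rfl⟩
    have hbound : (w - r) + s ≤ (w - r) * (n - 1) := by omega
    have key := build hn (w - r) ((w - r) + s) hwr (by omega) hbound (i + r) β
    have h1 : i + r + (w - r) = i + w := by omega
    have h2 : β - (((w - r) + s : ℕ) : ZMod (n + k)) =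
        β - ((w - r : ℕ) : ZMod (n + k)) - (s : ZMod (n + k)) := by
      push_cast; ring
    rw [h1, h2] at key
    exact key
end

section
/- Let 3 ≤ n < k+3, w = ⌈(k+1)/(n-2)⌉, ℓ > w, and let 0 < |i - j| = r < w. In ⋊_ℓ S^k_n, the duals of critical pairs (x^i_α, x^{i+w}_β) ∈ Crit(E_i) and (x^j_γ, x^{j+w}_δ) ∈ Crit(E_j) (with j = i + r) form a strict alternating cycle if and only if γ ≡ β - w + r - s (mod n+k) for some s with 0 ≤ s ≤ (w-r)(n-1) - (w - r), i.e., γ lies in the cyclic interval [β - w + r, ..., β - (w-r)(n-1)] modulo n+k. -/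
section aux
variable {n k : ℕ}

lemma crownMiss_iff (hn : 3 ≤ n) (x y : ZMod (n + k)) :
    crownMiss k y x ↔ (x - y).val ≤ k := by
  haveI : NeZero (n + k) := ⟨by omega⟩
  constructor
  · rintro ⟨t, ht, rfl⟩
    have h : (y + (t : ZMod (n+k))) - y = (t : ZMod (n+k)) := by ring
    rw [h, ZMod.val_natCast]
    exact le_trans (Nat.mod_le _ _) ht
  · intro h
    refine ⟨(x - y).val, h, ?_⟩
    rw [ZMod.natCast_zmod_val]
    ring

lemma step_iff_s14 (hn : 3 ≤ n) (x y : ZMod (n + k)) :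
    (¬ crownMiss k y x) ↔ 1 ≤ (y - x).val ∧ (y - x).val ≤ n - 1 := by
  haveI : NeZero (n + k) := ⟨by omega⟩
  rw [crownMiss_iff hn, not_le]
  set c := (y - x).val with hc
  have hclt : c < n + k := ZMod.val_lt _
  have key : c ≠ 0 → (x - y).val = n + k - c := by
    intro hne
    have h1 : ((n + k - c : ℕ) : ZMod (n+k)) = x - y := by
      rw [Nat.cast_sub hclt.le, ZMod.natCast_self, hc, ZMod.natCast_zmod_val,
        zero_sub, neg_sub]
    rw [← h1, ZMod.val_natCast, Nat.mod_eq_of_lt (by omega)]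
  constructor
  · intro h
    have hne : c ≠ 0 := by
      intro h0
      have h1 : y - x = 0 := by rwa [ZMod.val_eq_zero] at h0
      have h2 : x - y = 0 := by rw [← neg_sub, h1, neg_zero]
      rw [h2, ZMod.val_zero] at h; omega
    rw [key hne] at h
    omega
  · intro ⟨h1, h2⟩
    rw [key (by omega)]
    omega

lemma layLe_fwd (hn : 3 ≤ n) {p q : ℕ × ZMod (n + k)} (h : layLe k p q) :
    p.1 ≤ q.1 ∧ ∃ m : ℕ, q.1 - p.1 ≤ m ∧ m ≤ (q.1 - p.1) * (n - 1) ∧ q.2 = p.2 + m := by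
  haveI : NeZero (n + k) := ⟨by omega⟩
  induction h with
  | refl => exact ⟨le_refl _, 0, by simp⟩
  | @tail b c hab hbc ih =>
    obtain ⟨hle, m, hm1, hm2, hm3⟩ := ih
    obtain ⟨hstep1, hstep2⟩ := hbc
    rw [step_iff_s14 hn] at hstep2
    set cc := (c.2 - b.2).val with hccdef
    refine ⟨by omega, m + cc, by omega, ?_, ?_⟩
    · have e1 : c.1 - p.1 = (b.1 - p.1) + 1 := by omega
      rw [e1, Nat.succ_mul]
      have := hstep2.2
      generalize (b.1 - p.1) * (n - 1) = D at hm2 ⊢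
      omega
    · have h2 : c.2 = b.2 + (cc : ZMod (n+k)) := by
        rw [hccdef, ZMod.natCast_zmod_val]; ring
      rw [h2, hm3]; push_cast; ring

lemma layLe_bwd (hn : 3 ≤ n) :
    ∀ (d a : ℕ) (x : ZMod (n+k)) (m : ℕ), d ≤ m → m ≤ d * (n-1) →
      layLe k (a, x) (a + d, x + (m : ZMod (n+k))) := by
  haveI : NeZero (n + k) := ⟨by omega⟩
  intro d
  induction d with
  | zero =>
    intro a x m hm1 hm2
    have : m = 0 := by omega
    subst this
    simp only [Nat.add_zero, Nat.cast_zero, add_zero]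
    exact Relation.ReflTransGen.refl
  | succ d ih =>
    intro a x m hm1 hm2
    set c := max 1 (m - d * (n-1)) with hcdef
    have hprod : d * (n-1) ≤ (d+1) * (n-1) := Nat.mul_le_mul_right _ (by omega)
    have hdd : d ≤ d * (n-1) := Nat.le_mul_of_pos_right _ (by omega)
    have hsm : (d+1) * (n-1) = d * (n-1) + (n-1) := by rw [Nat.succ_mul]
    have hc1 : 1 ≤ c := le_max_left _ _
    have hc2 : c ≤ n - 1 := by
      generalize hD : d * (n-1) = D at *
      omega
    have hcm : c ≤ m := by
      generalize hD : d * (n-1) = D at *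
      omega
    have hc3 : d ≤ m - c := by
      generalize hD : d * (n-1) = D at *
      omega
    have hc4 : m - c ≤ d * (n-1) := by
      generalize hD : d * (n-1) = D at *
      omega
    have hstep : layStep k (a, x) (a + 1, x + (c : ZMod (n+k))) := by
      refine ⟨rfl, ?_⟩
      rw [step_iff_s14 hn]
      have h1 : (x + (c : ZMod (n+k))) - x = (c : ZMod (n+k)) := by ring
      rw [h1, ZMod.val_natCast, Nat.mod_eq_of_lt (by omega)]
      exact ⟨hc1, hc2⟩
    have hrest := ih (a + 1) (x + (c : ZMod (n+k))) (m - c) hc3 hc4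
    have heq1 : a + 1 + d = a + (d + 1) := by omega
    have heq2 : x + (c : ZMod (n+k)) + ((m - c : ℕ) : ZMod (n+k)) = x + (m : ZMod (n+k)) := by
      rw [add_assoc, ← Nat.cast_add, Nat.add_sub_cancel' hcm]
    rw [heq1, heq2] at hrest
    exact Relation.ReflTransGen.head hstep hrest

lemma layLe_iff (hn : 3 ≤ n) (a d : ℕ) (x y : ZMod (n + k)) :
    layLe k (a, x) (a + d, y) ↔
      ∃ m : ℕ, d ≤ m ∧ m ≤ d * (n - 1) ∧ y = x + (m : ZMod (n+k)) := by
  constructor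
  · intro h
    obtain ⟨-, m, hm1, hm2, hm3⟩ := layLe_fwd hn h
    simp only [Nat.add_sub_cancel_left] at hm1 hm2
    exact ⟨m, hm1, hm2, hm3⟩
  · rintro ⟨m, hm1, hm2, rfl⟩
    exact layLe_bwd hn d a x m hm1 hm2

/-- reachability over a long enough distance -/
lemma layLe_total (hn : 3 ≤ n) {d : ℕ} (hd : d + (n + k) ≤ d * (n - 1) + 1)
    (a : ℕ) (x y : ZMod (n + k)) : layLe k (a, x) (a + d, y) := by
  haveI : NeZero (n + k) := ⟨by omega⟩
  rw [layLe_iff hn]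
  refine ⟨d + (y - x - (d : ℕ)).val, by omega, ?_, ?_⟩
  · have := ZMod.val_lt (y - x - ((d:ℕ) : ZMod (n+k)))
    omega
  · push_cast
    rw [ZMod.natCast_zmod_val]
    ring
end aux


/-- In `⋊_ℓ S^k_n` with `3 ≤ n < k+3`, `w = ⌈(k+1)/(n-2)⌉`, `ℓ > w` and
`0 < |i - j| = r < w` (say `j = i + r`): the duals of critical pairs
`(x^i_α, x^{i+w}_β) ∈ Crit(E_i)` and `(x^j_γ, x^{j+w}_δ) ∈ Crit(E_j)` form a strict
alternating cycle iff `γ ≡ β - w + r - s (mod n+k)` for some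
`0 ≤ s ≤ (w-r)(n-1) - (w-r)`. -/
theorem layered_near_blocks (n k l w i j r : ℕ) (hn : 3 ≤ n) (hk : n < k + 3)
    (hw : w = (k + n - 2) / (n - 2)) (hl : w < l) (hr : 0 < r) (hrw : r < w)
    (hj : j = i + r) (hi : 1 ≤ i) (hjw : j + w ≤ l + 1)
    (α β γ δ : ZMod (n + k))
    (hcrit1 : ¬ layLe k (i, α) (i + w, β) ∧ ¬ layLe k (i + w, β) (i, α))
    (hcrit2 : ¬ layLe k (j, γ) (j + w, δ) ∧ ¬ layLe k (j + w, δ) (j, γ)) :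
    sac2 (layLe k) (i + w, β) (i, α) (j + w, δ) (j, γ) ↔
      ∃ s : ℕ, s ≤ (w - r) * (n - 1) - (w - r) ∧
        γ = β - ((w - r : ℕ) : ZMod (n + k)) - (s : ZMod (n + k)) := by
  haveI : NeZero (n + k) := ⟨by omega⟩
  -- key inequality from the definition of w
  have hdiv : n + k - 1 ≤ (w + 1) * (n - 2) := by
    have h1 := Nat.div_add_mod (k + n - 2) (n - 2)
    have h2 := Nat.mod_lt (k + n - 2) (show 0 < n - 2 by omega)
    rw [← hw] at h1
    have h3 : (w + 1) * (n - 2) = (n - 2) * w + (n - 2) := by ring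
    generalize hD : (n - 2) * w = D at *
    omega
  -- reachability from (i, α) to (j + w, δ)
  have htot : layLe k (i, α) (j + w, δ) := by
    have he : j + w = i + (r + w) := by omega
    rw [he]
    refine layLe_total hn ?_ i α δ
    have e1 : (r + w) * (n - 1) = (r + w) * (n - 2) + (r + w) := by
      have : n - 1 = (n - 2) + 1 := by omega
      rw [this]; ring
    have e2 : (w + 1) * (n - 2) ≤ (r + w) * (n - 2) :=
      Nat.mul_le_mul_right _ (by omega)
    omega
  -- the characterization of layLe k (j, γ) (i + w, β)
  have hchar : layLe k (j, γ) (i + w, β) ↔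
      ∃ s : ℕ, s ≤ (w - r) * (n - 1) - (w - r) ∧
        γ = β - ((w - r : ℕ) : ZMod (n + k)) - (s : ZMod (n + k)) := by
    have he : i + w = j + (w - r) := by omega
    rw [he, layLe_iff hn]
    have hle : (w - r) ≤ (w - r) * (n - 1) :=
      Nat.le_mul_of_pos_right _ (by omega)
    constructor
    · rintro ⟨m, hm1, hm2, hm3⟩
      refine ⟨m - (w - r), by omega, ?_⟩
      have hg : γ = β - (m : ZMod (n + k)) := by rw [hm3]; ring
      have hms : (m : ZMod (n + k)) =
          ((w - r : ℕ) : ZMod (n + k)) + ((m - (w - r) : ℕ) : ZMod (n + k)) := by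
        rw [← Nat.cast_add]; congr 1; omega
      rw [hg, hms]
      ring
    · rintro ⟨s, hs1, hs2⟩
      refine ⟨(w - r) + s, by omega, by omega, ?_⟩
      rw [hs2]
      push_cast
      ring
  constructor
  · intro hs
    exact hchar.mp hs.2.2.2.1
  · intro hrhs
    exact ⟨⟨hcrit1.2, hcrit1.1⟩, ⟨hcrit2.2, hcrit2.1⟩, htot, hchar.mpr hrhs,
      hcrit1.1, hcrit2.1⟩
end

section
/- Let 3 ≤ n < k+3, w = ⌈(k+1)/(n-2)⌉, ℓ > w, and |i - j| > w. Then for any critical pairs (x^i, x^{i+w}) ∈ Crit(E_i) and (x^j, x^{j+w}) ∈ Crit(E_j), their duals never form a strict alternating cycle; hence the block A_{i,j} of the adjacency matrix is zero. -/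
/-- In `⋊_ℓ S^k_n` with `3 ≤ n < k+3`, `w = ⌈(k+1)/(n-2)⌉`, `ℓ > w` and `|i - j| > w`
(say `j > i + w`): duals of critical pairs from `Crit(E_i)` and `Crit(E_j)` never form a
strict alternating cycle; hence the block `A_{i,j}` of the adjacency matrix is zero. -/
theorem layered_distant_blocks_zero (n k l w i j : ℕ) (hn : 3 ≤ n) (hk : n < k + 3)
    (hw : w = (k + n - 2) / (n - 2)) (hl : w < l) (hij : i + w < j)
    (hi : 1 ≤ i) (hjw : j + w ≤ l + 1)
    (α β γ δ : ZMod (n + k))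
    (hcrit1 : ¬ layLe k (i, α) (i + w, β) ∧ ¬ layLe k (i + w, β) (i, α))
    (hcrit2 : ¬ layLe k (j, γ) (j + w, δ) ∧ ¬ layLe k (j + w, δ) (j, γ)) :
    ¬ sac2 (layLe k) (i + w, β) (i, α) (j + w, δ) (j, γ) := by
  intro h
  have := layLe_fst_le h.2.2.2.1
  simp at this
  omega
end

section
/- The 3-layered crown ⋊_3 S^1_3 has exactly 8 critical pairs: (x^1_1, x^3_2), (x^1_2, x^3_3), (x^1_3, x^3_4), (x^1_4, x^3_1) from the extreme subposet E_1, and (x^2_1, x^4_2), (x^2_2, x^4_3), (x^2_3, x^4_4), (x^2_4, x^4_1) from E_2. -/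
/-- One step of the 3-layered crown `⋊₃ S^1_3` on `Fin 4 × ZMod 4`
(rows `X^1, X^2, X^3, X^4` are indexed `0, 1, 2, 3`): `x^{i+1}_j` covers `x^i_m`
exactly when `m` is a "hit" of `j`. -/
def lay3Step (x y : Fin 4 × ZMod 4) : Prop :=
  (y.1 : ℕ) = (x.1 : ℕ) + 1 ∧ ¬ crownMiss 1 y.2 x.2

/-- The order of `⋊₃ S^1_3`. -/
def lay3Le : Fin 4 × ZMod 4 → Fin 4 × ZMod 4 → Prop :=
  Relation.ReflTransGen lay3Step

/-- The strict order of `⋊₃ S^1_3`. -/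
def lay3Lt : Fin 4 × ZMod 4 → Fin 4 × ZMod 4 → Prop :=
  Relation.TransGen lay3Step

/-- Incomparability in `⋊₃ S^1_3`. -/
def lay3Inc (x y : Fin 4 × ZMod 4) : Prop :=
  ¬ lay3Le x y ∧ ¬ lay3Le y x

/-- `(x, y)` is a critical pair of `⋊₃ S^1_3`: `x ∥ y`, `D(x) ⊆ D(y)`, `U(y) ⊆ U(x)`. -/
def lay3Crit (x y : Fin 4 × ZMod 4) : Prop :=
  lay3Inc x y ∧ (∀ z, lay3Lt z x → lay3Lt z y) ∧ (∀ z, lay3Lt y z → lay3Lt x z)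

/-! ### Auxiliary development -/

lemma crownMiss_one_iff {N : ℕ} (i u : ZMod N) : crownMiss 1 i u ↔ (u = i ∨ u = i + 1) := by
  constructor
  · rintro ⟨t, ht, rfl⟩
    interval_cases t
    · left; simp
    · right; simp
  · rintro (rfl | rfl)
    · exact ⟨0, by simp, by simp⟩
    · exact ⟨1, le_refl 1, by simp⟩

def stepD (x y : Fin 4 × ZMod 4) : Prop :=
  (y.1 : ℕ) = (x.1 : ℕ) + 1 ∧ ¬ (x.2 = y.2 ∨ x.2 = y.2 + 1)

instance : ∀ x y, Decidable (stepD x y) := fun _ _ => by unfold stepD; infer_instance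

lemma step_iff_s17 (x y : Fin 4 × ZMod 4) : lay3Step x y ↔ stepD x y := by
  unfold lay3Step stepD
  rw [crownMiss_one_iff]

def reach : ℕ → Fin 4 × ZMod 4 → Fin 4 × ZMod 4 → Prop
  | 0, x, y => x = y
  | n+1, x, y => x = y ∨ ∃ z, stepD x z ∧ reach n z y

instance reachDec : ∀ n x y, Decidable (reach n x y)
  | 0, x, y => decidable_of_iff (x = y) (by simp only [reach])
  | (n+1), x, y =>
    have : ∀ z, Decidable (reach n z y) := fun z => reachDec n z y
    decidable_of_iff (x = y ∨ ∃ z, stepD x z ∧ reach n z y) (by simp only [reach])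

lemma reach_le : ∀ n x y, reach n x y → lay3Le x y
  | 0, x, y, h => by cases h; exact Relation.ReflTransGen.refl
  | (n+1), x, y, h => by
    rcases h with rfl | ⟨z, hs, hr⟩
    · exact Relation.ReflTransGen.refl
    · exact Relation.ReflTransGen.head ((step_iff_s17 x z).2 hs) (reach_le n z y hr)

lemma le_row {x y : Fin 4 × ZMod 4} (h : lay3Le x y) : (x.1 : ℕ) ≤ (y.1 : ℕ) := by
  induction h with
  | refl => exact le_refl _
  | tail _ hs ih => have := hs.1; omega

lemma le_reach {x y : Fin 4 × ZMod 4} (h : lay3Le x y) :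
    ∀ n, (y.1 : ℕ) ≤ (x.1 : ℕ) + n → reach n x y := by
  induction h using Relation.ReflTransGen.head_induction_on with
  | refl =>
    intro n _
    cases n with
    | zero => rfl
    | succ m => exact Or.inl rfl
  | head hs hrest ih =>
    intro n hn
    rename_i a c
    have hc : (c.1 : ℕ) = (a.1 : ℕ) + 1 := hs.1
    have hcy : (c.1 : ℕ) ≤ (y.1 : ℕ) := le_row hrest
    cases n with
    | zero => omega
    | succ m => exact Or.inr ⟨c, (step_iff_s17 _ _).1 hs, ih m (by omega)⟩

lemma le_iff_reach (x y : Fin 4 × ZMod 4) : lay3Le x y ↔ reach 3 x y := by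
  constructor
  · intro h
    exact le_reach h 3 (by have := y.1.isLt; omega)
  · exact reach_le 3 x y

lemma lt_row {x y : Fin 4 × ZMod 4} (h : lay3Lt x y) : (x.1 : ℕ) < (y.1 : ℕ) := by
  induction h with
  | single hs => have := hs.1; omega
  | tail _ hs ih => have := hs.1; omega

lemma lt_iff_reach (x y : Fin 4 × ZMod 4) : lay3Lt x y ↔ reach 3 x y ∧ x ≠ y := by
  constructor
  · intro h
    refine ⟨(le_iff_reach x y).1 h.to_reflTransGen, fun he => ?_⟩
    have := lt_row h
    rw [he] at this
    omega
  · rintro ⟨hr, hne⟩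
    rcases Relation.ReflTransGen.cases_head (reach_le 3 x y hr) with heq | ⟨c, hs, hrest⟩
    · exact absurd heq hne
    · exact Relation.TransGen.head' hs hrest

def chLe (x y : Fin 4 × ZMod 4) : Prop :=
  x = y ∨ ((y.1 : ℕ) = (x.1 : ℕ) + 1 ∧ (y.2 = x.2 + 1 ∨ y.2 = x.2 + 2))
    ∨ ((y.1 : ℕ) = (x.1 : ℕ) + 2 ∧ y.2 ≠ x.2 + 1)
    ∨ (y.1 : ℕ) = (x.1 : ℕ) + 3

instance : ∀ x y, Decidable (chLe x y) := fun _ _ => by unfold chLe; infer_instance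

lemma reach3_iff_chLe : ∀ x y, reach 3 x y ↔ chLe x y := by decide

def critD (x y : Fin 4 × ZMod 4) : Prop :=
  (¬ chLe x y ∧ ¬ chLe y x) ∧
  (∀ z, chLe z x ∧ z ≠ x → chLe z y ∧ z ≠ y) ∧
  (∀ z, chLe y z ∧ y ≠ z → chLe x z ∧ x ≠ z)

instance : ∀ x y, Decidable (critD x y) := fun _ _ => by unfold critD; infer_instance

lemma crit_iff (x y : Fin 4 × ZMod 4) : lay3Crit x y ↔ critD x y := by
  have hle : ∀ a b, lay3Le a b ↔ chLe a b :=
    fun a b => (le_iff_reach a b).trans (reach3_iff_chLe a b)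
  have hlt : ∀ a b, lay3Lt a b ↔ chLe a b ∧ a ≠ b :=
    fun a b => (lt_iff_reach a b).trans (and_congr_left' (reach3_iff_chLe a b))
  unfold lay3Crit lay3Inc critD
  simp only [hle, hlt]

lemma key : ∀ x y : Fin 4 × ZMod 4, critD x y ↔
    ((x, y) = (((0 : Fin 4), (1 : ZMod 4)), ((2 : Fin 4), (2 : ZMod 4))) ∨
     (x, y) = (((0 : Fin 4), (2 : ZMod 4)), ((2 : Fin 4), (3 : ZMod 4))) ∨
     (x, y) = (((0 : Fin 4), (3 : ZMod 4)), ((2 : Fin 4), (0 : ZMod 4))) ∨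
     (x, y) = (((0 : Fin 4), (0 : ZMod 4)), ((2 : Fin 4), (1 : ZMod 4))) ∨
     (x, y) = (((1 : Fin 4), (1 : ZMod 4)), ((3 : Fin 4), (2 : ZMod 4))) ∨
     (x, y) = (((1 : Fin 4), (2 : ZMod 4)), ((3 : Fin 4), (3 : ZMod 4))) ∨
     (x, y) = (((1 : Fin 4), (3 : ZMod 4)), ((3 : Fin 4), (0 : ZMod 4))) ∨
     (x, y) = (((1 : Fin 4), (0 : ZMod 4)), ((3 : Fin 4), (1 : ZMod 4)))) := by decide
/-- The 3-layered crown `⋊₃ S^1_3` has exactly 8 critical pairs: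
`(x^1_1,x^3_2), (x^1_2,x^3_3), (x^1_3,x^3_4), (x^1_4,x^3_1)` from `E_1` and
`(x^2_1,x^4_2), (x^2_2,x^4_3), (x^2_3,x^4_4), (x^2_4,x^4_1)` from `E_2`
(row `X^i` is index `i - 1`, and `x^i_4` has index `4 = 0` in `ZMod 4`). -/
theorem lay3_crit_pairs :
    {p : (Fin 4 × ZMod 4) × (Fin 4 × ZMod 4) | lay3Crit p.1 p.2} =
      ({(((0 : Fin 4), (1 : ZMod 4)), ((2 : Fin 4), (2 : ZMod 4))),
        (((0 : Fin 4), (2 : ZMod 4)), ((2 : Fin 4), (3 : ZMod 4))),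
        (((0 : Fin 4), (3 : ZMod 4)), ((2 : Fin 4), (0 : ZMod 4))),
        (((0 : Fin 4), (0 : ZMod 4)), ((2 : Fin 4), (1 : ZMod 4))),
        (((1 : Fin 4), (1 : ZMod 4)), ((3 : Fin 4), (2 : ZMod 4))),
        (((1 : Fin 4), (2 : ZMod 4)), ((3 : Fin 4), (3 : ZMod 4))),
        (((1 : Fin 4), (3 : ZMod 4)), ((3 : Fin 4), (0 : ZMod 4))),
        (((1 : Fin 4), (0 : ZMod 4)), ((3 : Fin 4), (1 : ZMod 4)))} :
        Set ((Fin 4 × ZMod 4) × (Fin 4 × ZMod 4))) ∧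
    {p : (Fin 4 × ZMod 4) × (Fin 4 × ZMod 4) | lay3Crit p.1 p.2}.ncard = 8 := by
  have hset : {p : (Fin 4 × ZMod 4) × (Fin 4 × ZMod 4) | lay3Crit p.1 p.2} =
      ({(((0 : Fin 4), (1 : ZMod 4)), ((2 : Fin 4), (2 : ZMod 4))),
        (((0 : Fin 4), (2 : ZMod 4)), ((2 : Fin 4), (3 : ZMod 4))),
        (((0 : Fin 4), (3 : ZMod 4)), ((2 : Fin 4), (0 : ZMod 4))),
        (((0 : Fin 4), (0 : ZMod 4)), ((2 : Fin 4), (1 : ZMod 4))),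
        (((1 : Fin 4), (1 : ZMod 4)), ((3 : Fin 4), (2 : ZMod 4))),
        (((1 : Fin 4), (2 : ZMod 4)), ((3 : Fin 4), (3 : ZMod 4))),
        (((1 : Fin 4), (3 : ZMod 4)), ((3 : Fin 4), (0 : ZMod 4))),
        (((1 : Fin 4), (0 : ZMod 4)), ((3 : Fin 4), (1 : ZMod 4)))} :
        Set ((Fin 4 × ZMod 4) × (Fin 4 × ZMod 4))) := by
    ext ⟨x, y⟩
    simp only [Set.mem_setOf_eq, Set.mem_insert_iff, Set.mem_singleton_iff, crit_iff]
    exact key x y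
  refine ⟨hset, ?_⟩
  rw [hset]
  have hfin : ({(((0 : Fin 4), (1 : ZMod 4)), ((2 : Fin 4), (2 : ZMod 4))),
        (((0 : Fin 4), (2 : ZMod 4)), ((2 : Fin 4), (3 : ZMod 4))),
        (((0 : Fin 4), (3 : ZMod 4)), ((2 : Fin 4), (0 : ZMod 4))),
        (((0 : Fin 4), (0 : ZMod 4)), ((2 : Fin 4), (1 : ZMod 4))),
        (((1 : Fin 4), (1 : ZMod 4)), ((3 : Fin 4), (2 : ZMod 4))),
        (((1 : Fin 4), (2 : ZMod 4)), ((3 : Fin 4), (3 : ZMod 4))),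
        (((1 : Fin 4), (3 : ZMod 4)), ((3 : Fin 4), (0 : ZMod 4))),
        (((1 : Fin 4), (0 : ZMod 4)), ((3 : Fin 4), (1 : ZMod 4)))} :
        Set ((Fin 4 × ZMod 4) × (Fin 4 × ZMod 4))) =
      (({(((0 : Fin 4), (1 : ZMod 4)), ((2 : Fin 4), (2 : ZMod 4))),
        (((0 : Fin 4), (2 : ZMod 4)), ((2 : Fin 4), (3 : ZMod 4))),
        (((0 : Fin 4), (3 : ZMod 4)), ((2 : Fin 4), (0 : ZMod 4))),
        (((0 : Fin 4), (0 : ZMod 4)), ((2 : Fin 4), (1 : ZMod 4))),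
        (((1 : Fin 4), (1 : ZMod 4)), ((3 : Fin 4), (2 : ZMod 4))),
        (((1 : Fin 4), (2 : ZMod 4)), ((3 : Fin 4), (3 : ZMod 4))),
        (((1 : Fin 4), (3 : ZMod 4)), ((3 : Fin 4), (0 : ZMod 4))),
        (((1 : Fin 4), (0 : ZMod 4)), ((3 : Fin 4), (1 : ZMod 4)))} :
        Finset ((Fin 4 × ZMod 4) × (Fin 4 × ZMod 4))) :
        Set ((Fin 4 × ZMod 4) × (Fin 4 × ZMod 4))) := by
    simp
  rw [hfin, Set.ncard_coe_finset]
  decide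
end

section
/- In the 3-layered crown ⋊_3 S^1_3, the skeleton of the strict hypergraph of critical pairs has exactly 20 edges; in particular, {(x^3_1, x^1_4), (x^4_1, x^2_4)} is a strict alternating cycle while {(x^3_1, x^1_4), (x^4_2, x^2_1)} is not. -/
-- auxiliary decidability and counting machinery
instance crownMiss.dec (k : ℕ) (i u : ZMod 4) : Decidable (crownMiss k i u) := by
  have h : (∃ t ∈ Finset.range (k+1), u = i + (t : ZMod 4)) ↔ crownMiss k i u := by
    simp [crownMiss, Nat.lt_succ_iff]
  exact decidable_of_iff _ h

instance lay3Step.dec (x y : Fin 4 × ZMod 4) : Decidable (lay3Step x y) := by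
  unfold lay3Step; infer_instance

lemma lay3Le_iff (x y : Fin 4 × ZMod 4) :
    lay3Le x y ↔ x = y ∨ lay3Step x y ∨ (∃ a, lay3Step x a ∧ lay3Step a y) ∨
      (∃ a b, lay3Step x a ∧ lay3Step a b ∧ lay3Step b y) := by
  constructor
  · intro h
    rcases h.cases_head with h | ⟨a, ha, h⟩
    · exact Or.inl h
    rcases h.cases_head with rfl | ⟨b, hb, h⟩
    · exact Or.inr (Or.inl ha)
    rcases h.cases_head with rfl | ⟨c, hc, h⟩
    · exact Or.inr (Or.inr (Or.inl ⟨a, ha, hb⟩))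
    rcases h.cases_head with rfl | ⟨d, hd, h⟩
    · exact Or.inr (Or.inr (Or.inr ⟨a, b, ha, hb, hc⟩))
    · exfalso
      have h1 := ha.1; have h2 := hb.1; have h3 := hc.1; have h4 := hd.1
      have := d.1.isLt
      omega
  · rintro (rfl | h | ⟨a, ha, hb⟩ | ⟨a, b, ha, hb, hc⟩)
    · exact Relation.ReflTransGen.refl
    · exact Relation.ReflTransGen.single h
    · exact Relation.ReflTransGen.head ha (Relation.ReflTransGen.single hb)
    · exact Relation.ReflTransGen.head ha
        (Relation.ReflTransGen.head hb (Relation.ReflTransGen.single hc))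

instance lay3Le.dec (x y : Fin 4 × ZMod 4) : Decidable (lay3Le x y) :=
  decidable_of_iff _ (lay3Le_iff x y).symm

lemma lay3Lt_iff (x y : Fin 4 × ZMod 4) :
    lay3Lt x y ↔ ∃ a, lay3Step x a ∧ lay3Le a y := by
  rw [lay3Lt, Relation.TransGen.head'_iff]; rfl

instance lay3Lt.dec (x y : Fin 4 × ZMod 4) : Decidable (lay3Lt x y) :=
  decidable_of_iff _ (lay3Lt_iff x y).symm

def leB (x y : Fin 4 × ZMod 4) : Bool :=
  decide (x = y) ||
  ((y.1 : ℕ) == (x.1 : ℕ) + 1 && (y.2 == x.2 + 1 || y.2 == x.2 + 2)) ||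
  ((y.1 : ℕ) == (x.1 : ℕ) + 2 && !(y.2 == x.2 + 1)) ||
  ((y.1 : ℕ) == (x.1 : ℕ) + 3)

def ltB (x y : Fin 4 × ZMod 4) : Bool :=
  ((y.1 : ℕ) == (x.1 : ℕ) + 1 && (y.2 == x.2 + 1 || y.2 == x.2 + 2)) ||
  ((y.1 : ℕ) == (x.1 : ℕ) + 2 && !(y.2 == x.2 + 1)) ||
  ((y.1 : ℕ) == (x.1 : ℕ) + 3)

lemma le_iff_leB : ∀ x y, lay3Le x y ↔ leB x y = true := by decide

lemma lt_iff_ltB : ∀ x y, lay3Lt x y ↔ ltB x y = true := by decide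

lemma le_funext : lay3Le = fun x y => leB x y = true :=
  funext fun x => funext fun y => propext (le_iff_leB x y)

lemma lt_funext : lay3Lt = fun x y => ltB x y = true :=
  funext fun x => funext fun y => propext (lt_iff_ltB x y)

abbrev V3 := Fin 4 × ZMod 4

def critP (x y : V3) : Prop :=
  (¬ leB x y = true ∧ ¬ leB y x = true) ∧
    (∀ z, ltB z x = true → ltB z y = true) ∧ (∀ z, ltB y z = true → ltB x z = true)

lemma crit_eq : lay3Crit = critP := by
  unfold lay3Crit lay3Inc critP
  rw [le_funext, lt_funext]

instance critPDec (x y : V3) : Decidable (critP x y) := by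
  unfold critP; infer_instance

instance critDec (x y : V3) : Decidable (lay3Crit x y) :=
  decidable_of_iff (critP x y) (by rw [crit_eq])

instance sacBDec (a b c d : V3) : Decidable (sac2 (fun x y => leB x y = true) a b c d) := by
  unfold sac2; infer_instance

instance sacDec (a b c d : V3) : Decidable (sac2 lay3Le a b c d) :=
  decidable_of_iff (sac2 (fun x y => leB x y = true) a b c d)
    (by rw [← le_funext])

def enc (x : V3) : ℕ := (x.1 : ℕ) * 4 + x.2.val

def enc2 (p : V3 × V3) : ℕ := 16 * enc p.1 + enc p.2

lemma enc_lt (x : V3) : enc x < 16 := by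
  have := x.1.isLt
  have : x.2.val < 4 := ZMod.val_lt x.2
  unfold enc; omega

lemma enc_inj : ∀ p q : V3, enc p = enc q → p = q := by decide

lemma enc2_inj : ∀ p q : V3 × V3, enc2 p = enc2 q → p = q := by
  rintro ⟨a, b⟩ ⟨c, d⟩ h
  unfold enc2 at h
  dsimp only at h
  have h1 := enc_lt a; have h2 := enc_lt b; have h3 := enc_lt c; have h4 := enc_lt d
  have : enc a = enc c ∧ enc b = enc d := by omega
  rw [enc_inj _ _ this.1, enc_inj _ _ this.2]

def critFinset : Finset (V3 × V3) := Finset.univ.filter fun p => lay3Crit p.1 p.2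

def T3 : Finset ((V3 × V3) × (V3 × V3)) :=
  (critFinset ×ˢ critFinset).filter fun pq =>
    sac2 lay3Le pq.1.2 pq.1.1 pq.2.2 pq.2.1 ∧ enc2 pq.1 < enc2 pq.2

lemma mem_T3 {pq : (V3 × V3) × (V3 × V3)} :
    pq ∈ T3 ↔ lay3Crit pq.1.1 pq.1.2 ∧ lay3Crit pq.2.1 pq.2.2 ∧
      sac2 lay3Le pq.1.2 pq.1.1 pq.2.2 pq.2.1 ∧ enc2 pq.1 < enc2 pq.2 := by
  simp [T3, critFinset, Finset.mem_filter, Finset.mem_product, and_assoc]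

lemma setS_eq :
    {e : Set (V3 × V3) |
      ∃ p q : V3 × V3,
        lay3Crit p.1 p.2 ∧ lay3Crit q.1 q.2 ∧
          sac2 lay3Le p.2 p.1 q.2 q.1 ∧ e = {p, q}} =
      (fun pq : (V3 × V3) × (V3 × V3) => ({pq.1, pq.2} : Set (V3 × V3))) '' ↑T3 := by
  ext e
  simp only [Set.mem_setOf_eq, Set.mem_image, Finset.mem_coe]
  constructor
  · rintro ⟨p, q, hp, hq, hs, rfl⟩
    have hpq : p ≠ q := by
      rintro rfl
      exact hs.2.2.2.2.1 hs.2.2.1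
    rcases lt_trichotomy (enc2 p) (enc2 q) with h | h | h
    · exact ⟨(p, q), mem_T3.2 ⟨hp, hq, hs, h⟩, rfl⟩
    · exact absurd (enc2_inj _ _ h) hpq
    · refine ⟨(q, p), mem_T3.2 ⟨hq, hp, ?_, h⟩, ?_⟩
      · exact ⟨hs.2.1, hs.1, hs.2.2.2.1, hs.2.2.1, hs.2.2.2.2.2, hs.2.2.2.2.1⟩
      · exact (Set.pair_comm p q).symm
  · rintro ⟨⟨p, q⟩, hmem, rfl⟩
    obtain ⟨hp, hq, hs, -⟩ := mem_T3.1 hmem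
    exact ⟨p, q, hp, hq, hs, rfl⟩

lemma injOn3 : Set.InjOn
    (fun pq : (V3 × V3) × (V3 × V3) => ({pq.1, pq.2} : Set (V3 × V3))) ↑T3 := by
  rintro ⟨p, q⟩ hpq ⟨p', q'⟩ hpq' heq
  have h1 := (mem_T3.1 (Finset.mem_coe.1 hpq)).2.2.2
  have h2 := (mem_T3.1 (Finset.mem_coe.1 hpq')).2.2.2
  rcases Set.pair_eq_pair_iff.1 heq with ⟨rfl, rfl⟩ | ⟨rfl, rfl⟩
  · rfl
  · dsimp only at h1 h2
    omega

lemma T3_card : T3.card = 20 := by decide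

/-- The skeleton of the strict hypergraph of `⋊₃ S^1_3` has exactly 20 edges; in
particular the duals `{(x^3_1, x^1_4), (x^4_1, x^2_4)}` form a strict alternating cycle
while `{(x^3_1, x^1_4), (x^4_2, x^2_1)}` do not. -/
theorem lay3_skeleton_edges :
    {e : Set ((Fin 4 × ZMod 4) × (Fin 4 × ZMod 4)) |
      ∃ p q : (Fin 4 × ZMod 4) × (Fin 4 × ZMod 4),
        lay3Crit p.1 p.2 ∧ lay3Crit q.1 q.2 ∧
          sac2 lay3Le p.2 p.1 q.2 q.1 ∧ e = {p, q}}.ncard = 20 ∧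
    sac2 lay3Le ((2 : Fin 4), (1 : ZMod 4)) ((0 : Fin 4), (0 : ZMod 4))
      ((3 : Fin 4), (1 : ZMod 4)) ((1 : Fin 4), (0 : ZMod 4)) ∧
    ¬ sac2 lay3Le ((2 : Fin 4), (1 : ZMod 4)) ((0 : Fin 4), (0 : ZMod 4))
      ((3 : Fin 4), (2 : ZMod 4)) ((1 : Fin 4), (1 : ZMod 4)) := by
  refine ⟨?_, by decide, by decide⟩
  rw [setS_eq, Set.ncard_image_of_injOn injOn3, Set.ncard_coe_finset, T3_card]
end
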